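/- arXiv:1803.01103 — 2 statements merged into one kernel-verified Lean document; each statement's English description precedes it below -/
import Mathlib

section
/- Let f ∈ L¹(ℝ²) ∩ L^∞(ℝ²) and define z(x) = (1/2π) ∫_{ℝ²} f(y) · log(|x−y|/(1+|y|)) dy. Then lim_{|x|→∞} z(x)/log|x| = (1/2π) ∫_{ℝ²} f(y) dy. -/
/-!
Write `log (‖x - y‖ / (1 + ‖y‖)) = log ‖x‖ * (1 + e(x, y))` (`e = logKernelRelError`). For fixed
`y` the error `log ‖x‖ * e(x, y)` is at most `log (2 + 2‖y‖)` in absolute value once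
`‖x‖ ≥ 2‖y‖ + 2`, so `e(x, y) → 0` as `‖x‖ → ∞`. Globally,
`log ‖x‖ * |e(x, y)|` is at most `3 log ‖x‖` plus the logarithmic singularity `|log ‖x - y‖|`
on the unit ball around `x`. Hence `|f y| * min |e(x, y)| 3` is dominated by `3 |f y|` and its
integral tends to `0`, while the excess over the truncation is bounded by `C` times the integral
of the (translated) singularity, a constant, which is `o(log ‖x‖)`.
-/

open MeasureTheory Real Filter Metric Bornology Topology

namespace Real

lemma abs_log_div_one_add_sub_log_le {a r t : ℝ} (ha : 0 ≤ a) (hr : 0 ≤ r) (ht : 4 ≤ t)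
    (har : a ≤ t + r) (hra : r ≤ t + a) :
    |log (a / (1 + r)) - log t| ≤ 3 * log t + if a < 1 then |log a| else 0 := by
  have hlogt : 0 ≤ log t := log_nonneg (by linarith)
  have hb : 0 < 1 + r := by linarith
  split_ifs with ha1
  · have hlogb : log (1 + r) ≤ 2 * log t := by
      rw [← log_rpow (by linarith)]
      exact log_le_log hb (by norm_num; nlinarith)
    have hlogb' : 0 ≤ log (1 + r) := log_nonneg (by linarith)
    rcases ha.eq_or_lt with rfl | ha0
    · simp only [zero_div, log_zero, zero_sub, abs_neg, abs_of_nonneg hlogt, abs_zero, add_zero]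
      linarith
    rw [log_div ha0.ne' hb.ne']
    have := abs_sub (log a) (log (1 + r) + log t)
    rw [abs_of_nonneg (by linarith : 0 ≤ log (1 + r) + log t)] at this
    rw [sub_sub]; linarith
  · push Not at ha1
    have hup : log (a / (1 + r)) ≤ log t :=
      log_le_log (by positivity) (by rw [div_le_iff₀ hb]; nlinarith)
    have hlow : log (1 / t ^ 2) ≤ log (a / (1 + r)) := by
      refine log_le_log (by positivity) ?_
      rw [div_le_div_iff₀ (by positivity) hb]
      nlinarith [mul_nonneg (sub_nonneg.2 ha1) (by nlinarith : (0 : ℝ) ≤ t ^ 2 - 1)]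
    rw [one_div, log_inv, log_pow] at hlow
    rw [abs_le]; constructor <;> push_cast at hlow <;> linarith

lemma abs_log_div_one_add_sub_log_le_log {a r t : ℝ} (hr : 0 ≤ r) (ht : 2 * r + 2 ≤ t)
    (hal : t - r ≤ a) (hau : a ≤ t + r) :
    |log (a / (1 + r)) - log t| ≤ log (2 + 2 * r) := by
  have ht0 : 0 < t := by linarith
  have hb : 0 < 1 + r := by linarith
  have hup : log (a / (1 + r)) ≤ log (2 * t) :=
    log_le_log (div_pos (by linarith) hb) (by rw [div_le_iff₀ hb]; nlinarith)
  have hlow : log (t / (2 + 2 * r)) ≤ log (a / (1 + r)) := by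
    refine log_le_log (by positivity) ?_
    rw [div_le_div_iff₀ (by positivity) hb]
    nlinarith
  rw [log_mul two_ne_zero ht0.ne'] at hup
  rw [log_div ht0.ne' (by positivity)] at hlow
  have h2 : log 2 ≤ log (2 + 2 * r) := log_le_log two_pos (by linarith)
  rw [abs_le]; constructor <;> linarith

end Real

lemma norm_abs_mul_min_abs_le (a t : ℝ) : ‖|a| * min |t| 3‖ ≤ 3 * |a| := by
  rw [Real.norm_eq_abs, abs_mul, abs_abs, abs_of_nonneg (le_min (abs_nonneg t) zero_le_three),
    mul_comm]
  exact mul_le_mul_of_nonneg_right (min_le_right _ _) (abs_nonneg a)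

section Kernel

variable {E : Type*} [NormedAddCommGroup E]

noncomputable def logKernel (x y : E) : ℝ := log (‖x - y‖ / (1 + ‖y‖))

noncomputable def logKernelRelError (x y : E) : ℝ := (logKernel x y - log ‖x‖) / log ‖x‖

noncomputable def logSingularity : E → ℝ := (ball 0 1).indicator fun w => |log ‖w‖|

lemma logSingularity_nonneg (w : E) : 0 ≤ logSingularity w :=
  Set.indicator_nonneg (fun _ _ => abs_nonneg _) w

lemma abs_logKernel_sub_log_le (x y : E) (hx : 4 ≤ ‖x‖) :
    |logKernel x y - log ‖x‖| ≤ 3 * log ‖x‖ + logSingularity (y - x) := by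
  have hind : logSingularity (y - x) = if ‖x - y‖ < 1 then |log ‖x - y‖| else 0 := by
    by_cases h : ‖x - y‖ < 1 <;> simp [logSingularity, h, norm_sub_rev y x]
  rw [hind]
  refine abs_log_div_one_add_sub_log_le (norm_nonneg _) (norm_nonneg _) hx ?_ ?_
  · exact norm_sub_le x y
  · exact norm_sub_rev x y ▸ norm_le_norm_add_norm_sub' y x

lemma abs_logKernel_sub_log_le_log (x y : E) (hx : 2 * ‖y‖ + 2 ≤ ‖x‖) :
    |logKernel x y - log ‖x‖| ≤ log (2 + 2 * ‖y‖) :=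
  abs_log_div_one_add_sub_log_le_log (norm_nonneg _) hx
    (by linarith [norm_sub_norm_le x y]) (norm_sub_le x y)

lemma measurable_logKernel [MeasurableSpace E] [BorelSpace E] (x : E) :
    Measurable (logKernel x) := by
  unfold logKernel; fun_prop

lemma tendsto_logKernelRelError (y : E) :
    Tendsto (fun x => logKernelRelError x y) (cobounded E) (𝓝 0) := by
  have hlog : Tendsto (fun x : E => log ‖x‖) (cobounded E) atTop :=
    tendsto_log_atTop.comp tendsto_norm_cobounded_atTop
  refine squeeze_zero_norm' ?_ (hlog.const_div_atTop (log (2 + 2 * ‖y‖)))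
  filter_upwards [hlog.eventually_gt_atTop 0, eventually_cobounded_le_norm (2 * ‖y‖ + 2)]
    with x hx hxy
  rw [logKernelRelError, norm_div, Real.norm_eq_abs, Real.norm_eq_abs, abs_of_pos hx]
  exact div_le_div_of_nonneg_right (abs_logKernel_sub_log_le_log x y hxy) hx.le

lemma abs_mul_logKernel_sub_log_le {a C : ℝ} (ha : |a| ≤ C) {x : E} (hx : 4 ≤ ‖x‖) (y : E) :
    |a * (logKernel x y - log ‖x‖)| ≤
      log ‖x‖ * (|a| * min |logKernelRelError x y| 3) +
        C * logSingularity (y - x) := by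
  have hL : 0 < log ‖x‖ := log_pos (by linarith)
  have hs := logSingularity_nonneg (y - x)
  have hC : 0 ≤ C := (abs_nonneg a).trans ha
  rw [logKernelRelError, abs_mul, abs_div, abs_of_pos hL]
  rcases le_total (|logKernel x y - log ‖x‖| / log ‖x‖) 3 with h | h
  · rw [min_eq_left h, mul_left_comm, mul_div_cancel₀ _ hL.ne']
    nlinarith [mul_nonneg hC hs]
  · rw [min_eq_right h]
    nlinarith [mul_le_mul_of_nonneg_left (abs_logKernel_sub_log_le x y hx) (abs_nonneg a),
      mul_le_mul_of_nonneg_right ha hs]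

end Kernel

section DominatedConvergence

variable {E : Type*} [NormedAddCommGroup E] [MeasurableSpace E] [BorelSpace E] {μ : Measure E}
  {f : E → ℝ}

lemma integrable_abs_mul_min_logKernelRelError (hf : Integrable f μ) (x : E) :
    Integrable (fun y => |f y| * min |logKernelRelError x y| 3) μ := by
  refine Integrable.mono' (hf.abs.const_mul 3) (hf.abs.aestronglyMeasurable.mul ?_)
    (Eventually.of_forall fun y => norm_abs_mul_min_abs_le _ _)
  exact ((((measurable_logKernel x).sub measurable_const).div_const _).abs.min
    measurable_const).aestronglyMeasurable

lemma tendsto_integral_abs_mul_min_logKernelRelError (hf : Integrable f μ) :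
    Tendsto (fun x => ∫ y, |f y| * min |logKernelRelError x y| 3 ∂μ)
      (cobounded E) (𝓝 0) := by
  have : (cobounded E).IsCountablyGenerated := by rw [← comap_norm_atTop]; infer_instance
  simpa using tendsto_integral_filter_of_dominated_convergence (fun y => 3 * |f y|)
    (Eventually.of_forall fun x =>
      (integrable_abs_mul_min_logKernelRelError hf x).aestronglyMeasurable)
    (Eventually.of_forall fun x => Eventually.of_forall fun y => norm_abs_mul_min_abs_le _ _)
    (hf.abs.const_mul 3) (Eventually.of_forall fun y =>
      ((tendsto_logKernelRelError y).abs.min tendsto_const_nhds).const_mul |f y|)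

end DominatedConvergence

section Integral

variable {E : Type*} [NormedAddCommGroup E] [NormedSpace ℝ E] [FiniteDimensional ℝ E]
  [MeasurableSpace E] [BorelSpace E] {μ : Measure E} [μ.IsAddHaarMeasure]

lemma integrable_logSingularity [Nontrivial E] : Integrable (logSingularity : E → ℝ) μ := by
  have hd : 1 ≤ Module.finrank ℝ E := Module.finrank_pos
  have hα : (1 / 2 : ℝ) < Module.finrank ℝ E := by
    have : (1 : ℝ) ≤ Module.finrank ℝ E := by exact_mod_cast hd
    linarith
  refine (integrableOn_ball_of_norm_le_rpow hd (C := 2) hα ?_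
    (by fun_prop : Measurable fun w : E => |log ‖w‖|).aestronglyMeasurable).integrable_indicator
    measurableSet_ball
  refine ae_restrict_of_forall_mem measurableSet_ball fun w hw => ?_
  rw [mem_ball_zero_iff] at hw
  rcases (norm_nonneg w).eq_or_lt with h | h
  · simp [← h]
  · have hsqrt : 0 < ‖w‖ ^ (1 / 2 : ℝ) := rpow_pos_of_pos h _
    have := abs_log_mul_self_rpow_lt ‖w‖ (1 / 2) h hw.le (by norm_num)
    rw [abs_mul, abs_of_pos hsqrt] at this
    rw [Real.norm_eq_abs, abs_abs, rpow_neg h.le, ← div_eq_mul_inv, le_div_iff₀ hsqrt]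
    linarith

variable {f : E → ℝ} {C : ℝ}

lemma integrable_mul_logKernel_sub_log [Nontrivial E] (hf : Integrable f μ)
    (hC : ∀ᵐ y ∂μ, |f y| ≤ C) {x : E} (hx : 4 ≤ ‖x‖) :
    Integrable (fun y => f y * (logKernel x y - log ‖x‖)) μ := by
  have hL : 0 ≤ log ‖x‖ := log_nonneg (by linarith)
  refine Integrable.mono' ((hf.abs.const_mul (3 * log ‖x‖)).add
    ((integrable_logSingularity.comp_sub_right x).const_mul C))
    (hf.aestronglyMeasurable.mul
      ((measurable_logKernel x).sub measurable_const).aestronglyMeasurable) ?_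
  filter_upwards [hC] with y hy
  refine (abs_mul_logKernel_sub_log_le hy hx y).trans ?_
  have : min |logKernelRelError x y| 3 ≤ 3 := min_le_right _ _
  have := mul_le_mul_of_nonneg_left this (abs_nonneg (f y))
  show _ ≤ 3 * log ‖x‖ * |f y| + C * logSingularity (y - x)
  nlinarith

lemma abs_integral_mul_logKernel_sub_log_le [Nontrivial E] (hf : Integrable f μ)
    (hC : ∀ᵐ y ∂μ, |f y| ≤ C) {x : E} (hx : 4 ≤ ‖x‖) :
    |∫ y, f y * (logKernel x y - log ‖x‖) ∂μ| ≤
      log ‖x‖ * ∫ y, |f y| * min |logKernelRelError x y| 3 ∂μ +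
        C * ∫ w, logSingularity w ∂μ := by
  have hs : Integrable (fun y => logSingularity (y - x)) μ :=
    integrable_logSingularity.comp_sub_right x
  calc |∫ y, f y * (logKernel x y - log ‖x‖) ∂μ|
      ≤ ∫ y, |f y * (logKernel x y - log ‖x‖)| ∂μ := abs_integral_le_integral_abs
    _ ≤ ∫ y, log ‖x‖ * (|f y| * min |logKernelRelError x y| 3) +
          C * logSingularity (y - x) ∂μ := by
        refine integral_mono_ae (integrable_mul_logKernel_sub_log hf hC hx).abs
          (((integrable_abs_mul_min_logKernelRelError hf x).const_mul _).add (hs.const_mul C)) ?_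
        filter_upwards [hC] with y hy
        exact abs_mul_logKernel_sub_log_le hy hx y
    _ = _ := by
        rw [integral_add ((integrable_abs_mul_min_logKernelRelError hf x).const_mul _)
            (hs.const_mul C),
          integral_const_mul, integral_const_mul,
          integral_sub_right_eq_self (fun w => logSingularity w) x]

theorem tendsto_integral_mul_logKernel_div_log [Nontrivial E] (hf : Integrable f μ)
    (hC : ∀ᵐ y ∂μ, |f y| ≤ C) :
    Tendsto (fun x => (∫ y, f y * logKernel x y ∂μ) / log ‖x‖) (cobounded E)
      (𝓝 (∫ y, f y ∂μ)) := by
  rw [← tendsto_sub_nhds_zero_iff]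
  have hbound := (tendsto_integral_abs_mul_min_logKernelRelError hf (μ := μ)).add
    ((tendsto_log_atTop.comp tendsto_norm_cobounded_atTop).const_div_atTop
      (C * ∫ w, logSingularity w ∂μ))
  rw [zero_add] at hbound
  refine squeeze_zero_norm' ?_ hbound
  filter_upwards [eventually_cobounded_le_norm 4] with x hx
  have hL : 0 < log ‖x‖ := log_pos (by linarith)
  have hsplit : ∫ y, f y * logKernel x y ∂μ =
      ∫ y, f y * (logKernel x y - log ‖x‖) ∂μ + log ‖x‖ * ∫ y, f y ∂μ := by
    rw [← integral_const_mul, ← integral_add (integrable_mul_logKernel_sub_log hf hC hx)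
      (hf.const_mul _)]
    congr 1 with y
    ring
  rw [hsplit, add_div, mul_div_cancel_left₀ _ hL.ne', add_sub_cancel_right, Real.norm_eq_abs,
    abs_div, abs_of_pos hL, div_le_iff₀ hL, Function.comp_apply, add_mul, div_mul_cancel₀ _ hL.ne']
  linarith [abs_integral_mul_logKernel_sub_log_le hf hC hx]

end Integral

theorem stmt_1
    (f : EuclideanSpace ℝ (Fin 2) → ℝ)
    (hf1 : Integrable f)
    (Cf : ℝ) (hfbdd : ∀ᵐ y, |f y| ≤ Cf)
    (z : EuclideanSpace ℝ (Fin 2) → ℝ)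
    (hz : ∀ x, z x = (1 / (2 * π)) * ∫ y, f y * Real.log (‖x - y‖ / (1 + ‖y‖))) :
    Tendsto (fun x => z x / Real.log ‖x‖)
      (Filter.cocompact (EuclideanSpace ℝ (Fin 2)))
      (nhds ((1 / (2 * π)) * ∫ y, f y)) := by
  have h := (tendsto_integral_mul_logKernel_div_log hf1 hfbdd).const_mul (1 / (2 * π))
  rw [cobounded_eq_cocompact] at h
  refine h.congr fun x => ?_
  rw [hz x, mul_div_assoc]
  rfl
end

section
/- Let φ : ℝ² → ℝ be harmonic on all of ℝ² and suppose there is a constant C₁ > 0 such that φ(x) ≤ C₁(1 + log|x|) for all x ∈ ℝ² with |x| ≥ 1. Then φ is constant. -/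
/-!
A harmonic function `u` on `ℂ` is the real part of an entire function `F`. With `c = 1 / (2 C)`,
the entire function `exp (c F)` has modulus `exp (c u) ≤ e^{1/2} |z|^{1/2}` for large `|z|`, so it
grows sublinearly; Cauchy's estimate on ever larger circles forces its derivative to vanish. Hence
`exp (c u)`, and with it `u`, is constant. Precomposing with the isometry `ℂ ≃ ℝ²` transfers this
to the plane.
-/

open Real Filter Bornology Asymptotics Metric Set InnerProductSpace
open scoped Laplacian

/-- The Laplacian of a function on `ℝ²`, as the sum of second directional
derivatives along the standard basis. -/
noncomputable def laplacian2 (φ : EuclideanSpace ℝ (Fin 2) → ℝ)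
    (x : EuclideanSpace ℝ (Fin 2)) : ℝ :=
  ∑ i : Fin 2,
    fderiv ℝ (fun y => fderiv ℝ φ y (EuclideanSpace.single i 1)) x
      (EuclideanSpace.single i 1)

theorem isLittleO_rpow_id_atTop {s : ℝ} (hs : s < 1) : (fun r : ℝ => r ^ s) =o[atTop] id := by
  refine (isLittleO_iff_tendsto' ?_).2 ?_
  · filter_upwards [eventually_gt_atTop 0] with r hr h
    exact absurd h hr.ne'
  · refine (tendsto_rpow_neg_atTop (sub_pos.2 hs)).congr' ?_
    filter_upwards [eventually_gt_atTop 0] with r hr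
    rw [id, neg_sub, Real.rpow_sub hr, Real.rpow_one]

theorem Differentiable.deriv_eq_zero_of_isLittleO {F : Type*} [NormedAddCommGroup F]
    [NormedSpace ℂ F] {f : ℂ → F} (hf : Differentiable ℂ f) (ho : f =o[cobounded ℂ] id)
    (z₀ : ℂ) : _root_.deriv f z₀ = 0 := by
  refine norm_le_zero_iff.1 (le_of_forall_pos_le_add fun ε hε => ?_)
  obtain ⟨R₀, -, hR₀⟩ := (hasBasis_cobounded_norm.eventually_iff).1
    ((isLittleO_iff.1 ho) (half_pos hε))
  set R := |R₀| + ‖z₀‖ + 1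
  have hR : 0 < R := by positivity
  have hsphere : ∀ z ∈ sphere z₀ R, ‖f z‖ ≤ ε / 2 * (2 * R) := by
    intro z hz
    have hdist : ‖z - z₀‖ = R := by rwa [← dist_eq_norm, ← mem_sphere]
    have hlow : R₀ ≤ ‖z‖ := by linarith [norm_sub_le z z₀, le_abs_self R₀]
    have hup : ‖z‖ ≤ 2 * R := by linarith [norm_sub_norm_le z z₀, norm_nonneg z₀, abs_nonneg R₀]
    calc ‖f z‖ ≤ ε / 2 * ‖z‖ := hR₀ hlow
      _ ≤ ε / 2 * (2 * R) := by gcongr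
  calc ‖_root_.deriv f z₀‖ ≤ ε / 2 * (2 * R) / R :=
        Complex.norm_deriv_le_of_forall_mem_sphere_norm_le hR hf.diffContOnCl hsphere
    _ = 0 + ε := by field_simp; ring

theorem Differentiable.apply_eq_apply_of_isLittleO {F : Type*} [NormedAddCommGroup F]
    [NormedSpace ℂ F] {f : ℂ → F} (hf : Differentiable ℂ f) (ho : f =o[cobounded ℂ] id)
    (z w : ℂ) : f z = f w :=
  is_const_of_deriv_eq_zero hf (hf.deriv_eq_zero_of_isLittleO ho) z w

theorem Differentiable.re_apply_eq_re_apply_of_re_le_log {F : ℂ → ℂ} (hF : Differentiable ℂ F)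
    {C : ℝ} (hC : 0 < C) (hgrowth : ∀ᶠ z in cobounded ℂ, (F z).re ≤ C * (1 + Real.log ‖z‖))
    (z w : ℂ) : (F z).re = (F w).re := by
  set c : ℝ := (2 * C)⁻¹
  have hc : 0 < c := by positivity
  set h : ℂ → ℂ := fun z => Complex.exp (c * F z)
  have hnorm : ∀ z, ‖h z‖ = Real.exp (c * (F z).re) := fun z => by
    simp only [h, Complex.norm_exp, Complex.re_ofReal_mul]
  have hbound : h =O[cobounded ℂ] fun z => ‖z‖ ^ (1 / 2 : ℝ) := by
    refine IsBigO.of_bound (Real.exp (1 / 2)) ?_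
    filter_upwards [hgrowth, eventually_cobounded_le_norm 1] with z hz hz1
    have hpos : 0 < ‖z‖ := by linarith
    calc ‖h z‖ = Real.exp (c * (F z).re) := hnorm z
      _ ≤ Real.exp (c * (C * (1 + Real.log ‖z‖))) := by gcongr
      _ = Real.exp (1 / 2) * ‖‖z‖ ^ (1 / 2 : ℝ)‖ := by
        rw [Real.norm_of_nonneg (by positivity), Real.rpow_def_of_pos hpos, ← Real.exp_add]
        congr 1
        simp only [c]
        field_simp
  have hsublinear : (fun z : ℂ => ‖z‖ ^ (1 / 2 : ℝ)) =o[cobounded ℂ] id :=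
    isLittleO_norm_right.1 <|
      (isLittleO_rpow_id_atTop (by norm_num)).comp_tendsto tendsto_norm_cobounded_atTop
  have heq := congrArg (‖·‖) <|
    ((hF.const_mul _).cexp).apply_eq_apply_of_isLittleO (hbound.trans_isLittleO hsublinear) z w
  rw [hnorm, hnorm, Real.exp_eq_exp] at heq
  exact mul_left_cancel₀ hc.ne' heq

theorem InnerProductSpace.HarmonicOnNhd.apply_eq_apply_of_le_log {u : ℂ → ℝ}
    (hu : HarmonicOnNhd u univ) {C : ℝ} (hC : 0 < C)
    (hgrowth : ∀ᶠ z in cobounded ℂ, u z ≤ C * (1 + Real.log ‖z‖)) (z w : ℂ) : u z = u w := by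
  obtain ⟨F, hF, rfl⟩ := hu.exists_analyticOnNhd_univ_re_eq
  exact Differentiable.re_apply_eq_re_apply_of_re_le_log
    (fun z => (hF z (mem_univ z)).differentiableAt) hC hgrowth z w

theorem fderiv_fderiv_apply_eq_iteratedFDeriv {𝕜 E F : Type*} [NontriviallyNormedField 𝕜]
    [NormedAddCommGroup E] [NormedSpace 𝕜 E] [NormedAddCommGroup F] [NormedSpace 𝕜 F]
    {f : E → F} {x : E} (hf : DifferentiableAt 𝕜 (fderiv 𝕜 f) x) (v w : E) :
    fderiv 𝕜 (fun y => fderiv 𝕜 f y v) x w = iteratedFDeriv 𝕜 2 f x ![w, v] := by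
  rw [iteratedFDeriv_two_apply, fderiv_clm_apply hf (differentiableAt_const v)]
  simp

theorem laplacian_comp_linearIsometryEquiv {E F G : Type*}
    [NormedAddCommGroup E] [InnerProductSpace ℝ E] [FiniteDimensional ℝ E]
    [NormedAddCommGroup F] [NormedSpace ℝ F]
    [NormedAddCommGroup G] [InnerProductSpace ℝ G] [FiniteDimensional ℝ G]
    {f : E → F} (hf : ContDiff ℝ 2 f) (g : G ≃ₗᵢ[ℝ] E) :
    Δ (f ∘ g) = Δ f ∘ g := by
  ext x
  let v := stdOrthonormalBasis ℝ G
  have hcomp : iteratedFDeriv ℝ 2 (f ∘ g) x =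
      (iteratedFDeriv ℝ 2 f (g x)).compContinuousLinearMap fun _ => (g : G →L[ℝ] E) :=
    (g : G →L[ℝ] E).iteratedFDeriv_comp_right hf x le_rfl
  simp only [laplacian_eq_iteratedFDeriv_orthonormalBasis _ v,
    laplacian_eq_iteratedFDeriv_orthonormalBasis _ (v.map g), hcomp, Function.comp_apply,
    ContinuousMultilinearMap.compContinuousLinearMap_apply, ContinuousLinearEquiv.coe_coe,
    LinearIsometryEquiv.coe_toContinuousLinearEquiv, OrthonormalBasis.map_apply]
  refine Finset.sum_congr rfl fun i _ => congrArg _ ?_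
  ext j
  fin_cases j <;> rfl

theorem laplacian2_eq_laplacian {φ : EuclideanSpace ℝ (Fin 2) → ℝ} (hφ : ContDiff ℝ 2 φ) :
    laplacian2 φ = Δ φ := by
  ext x
  have hφ' : Differentiable ℝ (fderiv ℝ φ) := (hφ.fderiv_right le_rfl).differentiable one_ne_zero
  rw [laplacian_eq_iteratedFDeriv_orthonormalBasis _ (EuclideanSpace.basisFun (Fin 2) ℝ),
    laplacian2]
  simp [fderiv_fderiv_apply_eq_iteratedFDeriv (hφ' x)]

theorem stmt_2
    (φ : EuclideanSpace ℝ (Fin 2) → ℝ)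
    (hφ : ContDiff ℝ 2 φ)
    (hharm : ∀ x, laplacian2 φ x = 0)
    (C₁ : ℝ) (hC₁ : 0 < C₁)
    (hgrowth : ∀ x : EuclideanSpace ℝ (Fin 2), 1 ≤ ‖x‖ → φ x ≤ C₁ * (1 + Real.log ‖x‖)) :
    ∃ c : ℝ, ∀ x, φ x = c := by
  let ψ := Complex.orthonormalBasisOneI.repr
  have hu : HarmonicOnNhd (φ ∘ ψ) univ := fun z _ => by
    refine ⟨(hφ.comp ψ.contDiff).contDiffAt, .of_eq ?_⟩
    rw [laplacian_comp_linearIsometryEquiv hφ, ← laplacian2_eq_laplacian hφ]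
    ext z
    exact hharm (ψ z)
  have hugrowth : ∀ᶠ z in cobounded ℂ, (φ ∘ ψ) z ≤ C₁ * (1 + Real.log ‖z‖) := by
    filter_upwards [eventually_cobounded_le_norm 1] with z hz
    simpa [ψ.norm_map] using hgrowth (ψ z) (by rwa [ψ.norm_map])
  refine ⟨φ 0, fun x => ?_⟩
  simpa using hu.apply_eq_apply_of_le_log hC₁ hugrowth (ψ.symm x) 0
end
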